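/- arXiv:1805.08593 — 3 statements merged into one kernel-verified Lean document; each statement's English description precedes it below -/
import Mathlib

section
/- Suppose the coordinates are sorted so that r_1 ≤ r_2 ≤ … ≤ r_n, and whenever r_i = r_{i+1} also b_i − a_i ≤ b_{i+1} − a_{i+1}. For k ∈ {1, …, n+1} define λ(k) = (Σ_{i<k} a_i r_i + Σ_{i≥k} b_i r_i) / (Σ_{i<k} a_i + Σ_{i≥k} b_i). Then Q(r; a, b) = max_{1 ≤ k ≤ n+1} λ(k); moreover, for any k attaining this maximum, the threshold vector W† defined by W†_i = a_i for i < k and W†_i = b_i for i ≥ k satisfies a_i ≤ W†_i ≤ b_i for all i and (Σ_{i=1}^n r_i W†_i) / (Σ_{i=1}^n W†_i) = Q(r; a, b), so the supremum is attained. -/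
open Finset

private def Wt {n : ℕ} (a b : Fin n → ℝ) (k : ℕ) : Fin n → ℝ :=
  fun i => if (i : ℕ) < k then a i else b i

/-- With coordinates sorted so that `r` is nondecreasing (and ties broken so
that `b i - a i` is nondecreasing along ties), the box-constrained linear-fractional value
`Q(r; a, b)` equals the maximum over thresholds `k ∈ {0, …, n}` of
`λ(k) = (Σ_{i<k} a_i r_i + Σ_{i≥k} b_i r_i) / (Σ_{i<k} a_i + Σ_{i≥k} b_i)`
(indexing thresholds from `0` so that paper's `k ∈ {1, …, n+1}` corresponds to `k-1` here);
moreover for any maximizing threshold the associated threshold weight vector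
`W†_i = a_i` for `i < k`, `W†_i = b_i` for `i ≥ k` is feasible and attains `Q(r; a, b)`. -/
theorem stmt_1 (n : ℕ) (hn : 1 ≤ n) (r a b : Fin n → ℝ)
    (ha : ∀ i, 0 < a i) (hab : ∀ i, a i ≤ b i)
    (hsort : Monotone r)
    (htie : ∀ i j : Fin n, (i : ℕ) + 1 = (j : ℕ) → r i = r j → b i - a i ≤ b j - a j)
    (lam : ℕ → ℝ)
    (hlam : ∀ k, lam k =
      ((∑ i ∈ univ.filter (fun i : Fin n => (i : ℕ) < k), a i * r i) +
        ∑ i ∈ univ.filter (fun i : Fin n => k ≤ (i : ℕ)), b i * r i) /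
      ((∑ i ∈ univ.filter (fun i : Fin n => (i : ℕ) < k), a i) +
        ∑ i ∈ univ.filter (fun i : Fin n => k ≤ (i : ℕ)), b i))
    (Q : ℝ)
    (hQ : Q = sSup { q : ℝ | ∃ W : Fin n → ℝ, (∀ i, a i ≤ W i ∧ W i ≤ b i) ∧
          q = (∑ i, r i * W i) / (∑ i, W i) }) :
    (∃ k ≤ n, lam k = Q ∧ ∀ k' ≤ n, lam k' ≤ Q) ∧
    (∀ k ≤ n, (∀ k' ≤ n, lam k' ≤ lam k) →
      (∀ i : Fin n,
        a i ≤ (if (i : ℕ) < k then a i else b i) ∧ (if (i : ℕ) < k then a i else b i) ≤ b i) ∧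
      (∑ i : Fin n, r i * (if (i : ℕ) < k then a i else b i)) /
        (∑ i : Fin n, (if (i : ℕ) < k then a i else b i)) = Q) := by
  haveI : NeZero n := ⟨by omega⟩
  have hbpos : ∀ i, 0 < b i := fun i => lt_of_lt_of_le (ha i) (hab i)
  have hWpos : ∀ k i, 0 < Wt a b k i := by
    intro k i
    by_cases h : (i : ℕ) < k <;> simp [Wt, h, ha i, hbpos i]
  have hWfeas : ∀ k i, a i ≤ Wt a b k i ∧ Wt a b k i ≤ b i := by
    intro k i
    by_cases h : (i : ℕ) < k <;> simp [Wt, h, hab i]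
  have hden : ∀ k, (0:ℝ) < ∑ i, Wt a b k i := fun k =>
    Finset.sum_pos (fun i _ => hWpos k i) univ_nonempty
  have hfilter : ∀ k, univ.filter (fun i : Fin n => k ≤ (i : ℕ))
      = univ.filter (fun i : Fin n => ¬ (i : ℕ) < k) := by
    intro k; ext i; simp [not_lt]
  have hlam' : ∀ k, lam k = (∑ i, r i * Wt a b k i) / (∑ i, Wt a b k i) := by
    intro k
    rw [hlam k]
    congr 1
    · rw [show (∑ i : Fin n, r i * Wt a b k i)
          = ∑ i : Fin n, (if (i : ℕ) < k then a i * r i else b i * r i) from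
        Finset.sum_congr rfl (fun i _ => by
          by_cases h : (i : ℕ) < k <;> simp [Wt, h, mul_comm])]
      rw [Finset.sum_ite, hfilter]
    · rw [show (∑ i : Fin n, Wt a b k i)
          = ∑ i : Fin n, (if (i : ℕ) < k then a i else b i) from rfl]
      rw [Finset.sum_ite, hfilter]
  have hnum : ∀ k, (∑ i, r i * Wt a b k i) = lam k * ∑ i, Wt a b k i := by
    intro k
    rw [hlam' k, div_mul_cancel₀]
    exact (hden k).ne'
  -- lam k is a value of the objective at a feasible point
  have hmem : ∀ k, lam k ∈ { q : ℝ | ∃ W : Fin n → ℝ,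
      (∀ i, a i ≤ W i ∧ W i ≤ b i) ∧ q = (∑ i, r i * W i) / (∑ i, W i) } := by
    intro k
    exact ⟨Wt a b k, fun i => hWfeas k i, hlam' k⟩
  -- maximizer over thresholds
  obtain ⟨kstar, hkmem, hkmax⟩ :=
    Finset.exists_max_image (Finset.range (n+1)) lam ⟨0, by simp⟩
  have hkstar_le : kstar ≤ n := by simpa [Nat.lt_succ_iff] using hkmem
  have hmax : ∀ k ≤ n, lam k ≤ lam kstar := fun k hk =>
    hkmax k (by simp [Nat.lt_succ_iff, hk])
  set L := lam kstar with hL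
  -- L is an upper bound for the whole feasible set
  have hub : ∀ q ∈ { q : ℝ | ∃ W : Fin n → ℝ,
      (∀ i, a i ≤ W i ∧ W i ≤ b i) ∧ q = (∑ i, r i * W i) / (∑ i, W i) }, q ≤ L := by
    rintro q ⟨V, hV, rfl⟩
    have hVpos : ∀ i, 0 < V i := fun i => lt_of_lt_of_le (ha i) (hV i).1
    have hsum : (0:ℝ) < ∑ i, V i := Finset.sum_pos (fun i _ => hVpos i) univ_nonempty
    rw [div_le_iff₀ hsum]
    obtain ⟨k0, hk0n, hk0iff⟩ : ∃ k0, k0 ≤ n ∧ ∀ i : Fin n, ((i : ℕ) < k0 ↔ r i < L) := by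
      by_cases hT : (univ.filter (fun i : Fin n => L ≤ r i)).Nonempty
      · set i0 := (univ.filter (fun i : Fin n => L ≤ r i)).min' hT with hi0
        have hi0mem : L ≤ r i0 := by
          have := Finset.min'_mem _ hT
          simpa [hi0] using this
        refine ⟨(i0 : ℕ), le_of_lt i0.isLt, fun i => ?_⟩
        constructor
        · intro hi
          by_contra hcon
          push_neg at hcon
          have h1 : i0 ≤ i := Finset.min'_le _ i (by simpa using hcon)
          have : (i0 : ℕ) ≤ (i : ℕ) := h1
          omega
        · intro hi
          by_contra hcon
          push_neg at hcon
          have h1 : i0 ≤ i := hcon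
          have : r i0 ≤ r i := hsort h1
          linarith
      · rw [Finset.not_nonempty_iff_eq_empty, Finset.filter_eq_empty_iff] at hT
        refine ⟨n, le_refl n, fun i => ?_⟩
        have hlt : ¬ L ≤ r i := hT (Finset.mem_univ i)
        exact ⟨fun _ => not_le.mp hlt, fun _ => i.isLt⟩
    have key : ∀ i : Fin n, (r i - L) * V i ≤ (r i - L) * Wt a b k0 i := by
      intro i
      by_cases h : (i : ℕ) < k0
      · have hrL : r i - L ≤ 0 := by
          have := (hk0iff i).1 h; linarith
        have hWeq : Wt a b k0 i = a i := by simp [Wt, h]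
        rw [hWeq]
        exact mul_le_mul_of_nonpos_left (hV i).1 hrL
      · have hrL : 0 ≤ r i - L := by
          have : ¬ r i < L := fun hc => h ((hk0iff i).2 hc)
          linarith [not_lt.mp this]
        have hWeq : Wt a b k0 i = b i := by simp [Wt, h]
        rw [hWeq]
        exact mul_le_mul_of_nonneg_left (hV i).2 hrL
    have h1 : ∑ i, (r i - L) * V i ≤ ∑ i, (r i - L) * Wt a b k0 i :=
      Finset.sum_le_sum (fun i _ => key i)
    have e1 : ∑ i, (r i - L) * V i = (∑ i, r i * V i) - L * ∑ i, V i := by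
      simp [sub_mul, Finset.sum_sub_distrib, Finset.mul_sum]
    have e2 : ∑ i, (r i - L) * Wt a b k0 i = (lam k0 - L) * ∑ i, Wt a b k0 i := by
      simp [sub_mul, Finset.sum_sub_distrib, hnum k0, Finset.mul_sum]
    have hle : lam k0 ≤ L := hmax k0 hk0n
    nlinarith [hden k0]
  have hQeq : Q = L := by
    rw [hQ]
    apply le_antisymm
    · exact csSup_le ⟨lam 0, hmem 0⟩ hub
    · exact le_csSup ⟨L, fun q hq => hub q hq⟩ (hmem kstar)
  constructor
  · exact ⟨kstar, hkstar_le, hQeq.symm, fun k' hk' => (hmax k' hk').trans hQeq.ge⟩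
  · intro k hk hkm
    refine ⟨fun i => hWfeas k i, ?_⟩
    have hgoal : (∑ i : Fin n, r i * Wt a b k i) / (∑ i : Fin n, Wt a b k i) = Q := by
      rw [← hlam' k]
      have h1 : lam k ≤ L := hmax k hk
      have h2 : L ≤ lam k := hkm kstar hkstar_le
      rw [hQeq]; linarith
    exact hgoal
end

section
/- Suppose the coordinates are sorted so that r_1 ≤ r_2 ≤ … ≤ r_n, and whenever r_i = r_{i+1} also b_i − a_i ≤ b_{i+1} − a_{i+1}. For k ∈ {1, …, n+1} define λ(k) = (Σ_{i<k} a_i r_i + Σ_{i≥k} b_i r_i) / (Σ_{i<k} a_i + Σ_{i≥k} b_i). Then the finite sequence λ(1), λ(2), …, λ(n+1) is unimodal: there exists k* ∈ {1, …, n+1} such that λ(1) ≤ λ(2) ≤ … ≤ λ(k*) and λ(k*) ≥ λ(k*+1) ≥ … ≥ λ(n+1). -/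
open Finset

private lemma aux_le (T S d x : ℝ) (hS : 0 < S) (hS' : 0 < S - d) (hd : 0 ≤ d)
    (h : x ≤ T / S) : T / S ≤ (T - d * x) / (S - d) := by
  rw [div_le_div_iff₀ hS hS']
  have hx : x * S ≤ T := (le_div_iff₀ hS).mp h
  nlinarith

private lemma aux_ge (T S d x : ℝ) (hS : 0 < S) (hS' : 0 < S - d) (hd : 0 ≤ d)
    (h : T / S ≤ x) : (T - d * x) / (S - d) ≤ T / S := by
  rw [div_le_div_iff₀ hS' hS]
  have hx : T ≤ x * S := (div_le_iff₀ hS).mp h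
  nlinarith

private lemma sum_lt_succ {n : ℕ} (f : Fin n → ℝ) (k : ℕ) (hk : k < n) :
    ∑ i ∈ univ.filter (fun i : Fin n => (i : ℕ) < k + 1), f i
      = (∑ i ∈ univ.filter (fun i : Fin n => (i : ℕ) < k), f i) + f ⟨k, hk⟩ := by
  have hset : univ.filter (fun i : Fin n => (i : ℕ) < k + 1)
      = insert ⟨k, hk⟩ (univ.filter (fun i : Fin n => (i : ℕ) < k)) := by
    ext i
    simp only [mem_insert, mem_filter, mem_univ, true_and, Fin.ext_iff]
    omega
  rw [hset, Finset.sum_insert (by simp)]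
  ring

private lemma sum_ge_succ {n : ℕ} (f : Fin n → ℝ) (k : ℕ) (hk : k < n) :
    ∑ i ∈ univ.filter (fun i : Fin n => k + 1 ≤ (i : ℕ)), f i
      = (∑ i ∈ univ.filter (fun i : Fin n => k ≤ (i : ℕ)), f i) - f ⟨k, hk⟩ := by
  have hset : univ.filter (fun i : Fin n => k ≤ (i : ℕ))
      = insert ⟨k, hk⟩ (univ.filter (fun i : Fin n => k + 1 ≤ (i : ℕ))) := by
    ext i
    simp only [mem_insert, mem_filter, mem_univ, true_and, Fin.ext_iff]
    omega
  rw [hset, Finset.sum_insert (by simp)]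
  ring

private lemma chain_mono (f : ℕ → ℝ) (m : ℕ) (h : ∀ j, j < m → f j ≤ f (j + 1)) :
    ∀ j₁ j₂, j₁ ≤ j₂ → j₂ ≤ m → f j₁ ≤ f j₂ := by
  intro j₁ j₂ h12
  induction j₂, h12 using Nat.le_induction with
  | base => intro _; exact le_rfl
  | succ t ht ih =>
      intro h2m
      exact le_trans (ih (by omega)) (h t (by omega))

private lemma chain_anti (f : ℕ → ℝ) (k m : ℕ) (h : ∀ j, k ≤ j → j < m → f (j + 1) ≤ f j) :
    ∀ j₁ j₂, k ≤ j₁ → j₁ ≤ j₂ → j₂ ≤ m → f j₂ ≤ f j₁ := by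
  intro j₁ j₂ hk1 h12
  induction j₂, h12 using Nat.le_induction with
  | base => intro _; exact le_rfl
  | succ t ht ih =>
      intro hm
      exact le_trans (h t (by omega) (by omega)) (ih (by omega))

/-- With coordinates sorted so that `r` is nondecreasing (and ties broken so
that `b i - a i` is nondecreasing along ties), the finite sequence
`λ(k) = (Σ_{i<k} a_i r_i + Σ_{i≥k} b_i r_i) / (Σ_{i<k} a_i + Σ_{i≥k} b_i)`, for thresholds
`k ∈ {0, …, n}` (paper's `k ∈ {1, …, n+1}` shifted down by one), is unimodal: there is a
`k* ∈ {0, …, n}` so that `λ` is nondecreasing up to `k*` and nonincreasing after `k*`. -/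
theorem stmt_2 (n : ℕ) (hn : 1 ≤ n) (r a b : Fin n → ℝ)
    (ha : ∀ i, 0 < a i) (hab : ∀ i, a i ≤ b i)
    (hsort : Monotone r)
    (htie : ∀ i j : Fin n, (i : ℕ) + 1 = (j : ℕ) → r i = r j → b i - a i ≤ b j - a j)
    (lam : ℕ → ℝ)
    (hlam : ∀ k, lam k =
      ((∑ i ∈ univ.filter (fun i : Fin n => (i : ℕ) < k), a i * r i) +
        ∑ i ∈ univ.filter (fun i : Fin n => k ≤ (i : ℕ)), b i * r i) /
      ((∑ i ∈ univ.filter (fun i : Fin n => (i : ℕ) < k), a i) +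
        ∑ i ∈ univ.filter (fun i : Fin n => k ≤ (i : ℕ)), b i)) :
    ∃ k ≤ n, (∀ j₁ j₂, j₁ ≤ j₂ → j₂ ≤ k → lam j₁ ≤ lam j₂) ∧
      (∀ j₁ j₂, k ≤ j₁ → j₁ ≤ j₂ → j₂ ≤ n → lam j₂ ≤ lam j₁) := by
  classical
  have hb : ∀ i, 0 < b i := fun i => lt_of_lt_of_le (ha i) (hab i)
  -- positivity of the denominators
  have hS : ∀ k : ℕ, 0 < (∑ i ∈ univ.filter (fun i : Fin n => (i : ℕ) < k), a i) +
      ∑ i ∈ univ.filter (fun i : Fin n => k ≤ (i : ℕ)), b i := by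
    intro k
    rcases Nat.eq_zero_or_pos k with h0 | h0
    · have h1 : (0:ℝ) ≤ ∑ i ∈ univ.filter (fun i : Fin n => (i : ℕ) < k), a i :=
        Finset.sum_nonneg fun i _ => (ha i).le
      have h2 : 0 < ∑ i ∈ univ.filter (fun i : Fin n => k ≤ (i : ℕ)), b i :=
        Finset.sum_pos (fun i _ => hb i) ⟨⟨0, hn⟩, by simp [h0]⟩
      linarith
    · have h1 : 0 < ∑ i ∈ univ.filter (fun i : Fin n => (i : ℕ) < k), a i :=
        Finset.sum_pos (fun i _ => ha i) ⟨⟨0, hn⟩, by simpa using h0⟩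
      have h2 : (0:ℝ) ≤ ∑ i ∈ univ.filter (fun i : Fin n => k ≤ (i : ℕ)), b i :=
        Finset.sum_nonneg fun i _ => (hb i).le
      linarith
  -- the key one-step comparison
  have key : ∀ (k : ℕ) (hk : k < n),
      (r ⟨k, hk⟩ ≤ lam k → lam k ≤ lam (k + 1)) ∧
      (lam k ≤ r ⟨k, hk⟩ → lam (k + 1) ≤ lam k) := by
    intro k hk
    set T := (∑ i ∈ univ.filter (fun i : Fin n => (i : ℕ) < k), a i * r i) +
        ∑ i ∈ univ.filter (fun i : Fin n => k ≤ (i : ℕ)), b i * r i with hT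
    set S := (∑ i ∈ univ.filter (fun i : Fin n => (i : ℕ) < k), a i) +
        ∑ i ∈ univ.filter (fun i : Fin n => k ≤ (i : ℕ)), b i with hSdef
    set d : ℝ := b ⟨k, hk⟩ - a ⟨k, hk⟩ with hd
    have hdnn : 0 ≤ d := by have := hab ⟨k, hk⟩; simp [hd]; linarith
    have hSpos : 0 < S := hS k
    have hS'eq : (∑ i ∈ univ.filter (fun i : Fin n => (i : ℕ) < k + 1), a i) +
        ∑ i ∈ univ.filter (fun i : Fin n => k + 1 ≤ (i : ℕ)), b i = S - d := by
      rw [sum_lt_succ a k hk, sum_ge_succ b k hk]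
      simp only [hSdef, hd]; ring
    have hS'pos : 0 < S - d := by
      have := hS (k + 1); rw [hS'eq] at this; exact this
    have hlk : lam k = T / S := hlam k
    have hlk1 : lam (k + 1) = (T - d * r ⟨k, hk⟩) / (S - d) := by
      rw [hlam (k + 1), sum_lt_succ a k hk, sum_ge_succ b k hk,
        sum_lt_succ (fun i => a i * r i) k hk, sum_ge_succ (fun i => b i * r i) k hk]
      simp only [hT, hSdef, hd]
      ring
    constructor
    · intro h
      rw [hlk] at h ⊢
      rw [hlk1]
      exact aux_le T S d (r ⟨k, hk⟩) hSpos hS'pos hdnn h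
    · intro h
      rw [hlk] at h ⊢
      rw [hlk1]
      exact aux_ge T S d (r ⟨k, hk⟩) hSpos hS'pos hdnn h
  by_cases hdec : ∃ k, k < n ∧ lam (k + 1) < lam k
  · -- there is a strict decrease; take the first one
    obtain ⟨k₀, hk₀⟩ := hdec
    let P : ℕ → Prop := fun k => k < n ∧ lam (k + 1) < lam k
    have hPdec : DecidablePred P := Classical.decPred P
    set ks := Nat.find (⟨k₀, hk₀⟩ : ∃ k, P k) with hks
    have hPks : P ks := Nat.find_spec (⟨k₀, hk₀⟩ : ∃ k, P k)
    have hksn : ks < n := hPks.1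
    -- strict decrease at ks forces lam ks < r ks
    have hrstar : lam ks < r ⟨ks, hksn⟩ := by
      by_contra hcon
      push_neg at hcon
      exact absurd ((key ks hksn).1 hcon) (not_le.mpr hPks.2)
    -- invariant along the decreasing phase
    have inv : ∀ m, ks ≤ m → ∀ (hm : m < n), lam m ≤ r ⟨m, hm⟩ := by
      intro m hm
      induction m, hm using Nat.le_induction with
      | base => intro hmn; exact hrstar.le
      | succ t ht ih =>
          intro hmn
          have htn : t < n := by omega
          have h1 : lam t ≤ r ⟨t, htn⟩ := ih htn
          have h2 : lam (t + 1) ≤ lam t := (key t htn).2 h1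
          have h3 : r ⟨t, htn⟩ ≤ r ⟨t + 1, hmn⟩ := hsort (by simp [Fin.le_def])
          linarith
    refine ⟨ks, hksn.le, ?_, ?_⟩
    · refine chain_mono lam ks (fun j hj => ?_)
      have hnot : ¬ P j := Nat.find_min (⟨k₀, hk₀⟩ : ∃ k, P k) hj
      have hjn : j < n := by omega
      by_contra hcon
      push_neg at hcon
      exact hnot ⟨hjn, hcon⟩
    · exact chain_anti lam ks n (fun j hj hjn => (key j hjn).2 (inv j hj hjn))
  · -- no strict decrease anywhere: lam is nondecreasing on [0, n]
    push_neg at hdec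
    refine ⟨n, le_rfl, ?_, ?_⟩
    · exact chain_mono lam n (fun j hj => hdec j hj)
    · intro j₁ j₂ h1 h2 h3
      have : j₁ = j₂ := by omega
      rw [this]
end

section
/- There exists a nondecreasing function ũ : ℝ → [0, 1] such that the vector W* defined by W*_i = a_i + (b_i − a_i) · ũ(r_i) satisfies a_i ≤ W*_i ≤ b_i for all i and (Σ_{i=1}^n r_i W*_i) / (Σ_{i=1}^n W*_i) = Q(r; a, b); that is, the box-constrained linear-fractional supremum is attained by weights that are a nondecreasing function of the coefficient r_i, equal to the lower bound a_i below a threshold value of r_i and to the upper bound b_i above it. -/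
/-!
The ratio is continuous on the compact box, so the supremum is a maximum `q`, attained at
some `V`. For positive weights, the ratio at `W` is at least `q` iff `∑ (r i - q) * W i ≥ 0`.
This linear functional of `W` is maximised termwise by `W i = b i` when `q ≤ r i` and
`W i = a i` otherwise, and it is already nonnegative at `V`; so these threshold weights
reach `q`.
-/

open Finset

noncomputable def thresholdStep (q : ℝ) (y : ℝ) : ℝ := if q ≤ y then 1 else 0

theorem monotone_thresholdStep (q : ℝ) : Monotone (thresholdStep q) := by
  intro x y hxy
  unfold thresholdStep
  split_ifs with hx hy
  · rfl
  · exact absurd (hx.trans hxy) hy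
  · norm_num
  · rfl

theorem thresholdStep_mem_Icc (q y : ℝ) : thresholdStep q y ∈ Set.Icc (0 : ℝ) 1 := by
  unfold thresholdStep
  split_ifs <;> norm_num

theorem le_add_sub_mul_and_le {a b t : ℝ} (hab : a ≤ b) (ht : t ∈ Set.Icc (0 : ℝ) 1) :
    a ≤ a + (b - a) * t ∧ a + (b - a) * t ≤ b := by
  obtain ⟨ht0, ht1⟩ := ht
  constructor <;> nlinarith

theorem sub_mul_le_sub_mul_thresholdStep {q r a b v : ℝ} (hav : a ≤ v) (hvb : v ≤ b) :
    (r - q) * v ≤ (r - q) * (a + (b - a) * thresholdStep q r) := by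
  unfold thresholdStep
  split_ifs with h
  · nlinarith
  · nlinarith

variable {ι : Type*} [Fintype ι]

noncomputable def weightedMean (r W : ι → ℝ) : ℝ := (∑ i, r i * W i) / ∑ i, W i

theorem le_weightedMean_iff {r W : ι → ℝ} (hW : 0 < ∑ i, W i) (q : ℝ) :
    q ≤ weightedMean r W ↔ 0 ≤ ∑ i, (r i - q) * W i := by
  simp only [weightedMean, le_div_iff₀ hW, sub_mul, sum_sub_distrib, ← mul_sum, sub_nonneg]

theorem exists_forall_weightedMean_le [Nonempty ι] (r : ι → ℝ) {a b : ι → ℝ}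
    (ha : ∀ i, 0 < a i) (hab : ∀ i, a i ≤ b i) :
    ∃ V : ι → ℝ, (∀ i, a i ≤ V i ∧ V i ≤ b i) ∧
      ∀ W : ι → ℝ, (∀ i, a i ≤ W i ∧ W i ≤ b i) → weightedMean r W ≤ weightedMean r V := by
  have hbox : ∀ W, W ∈ Set.Icc a b ↔ ∀ i, a i ≤ W i ∧ W i ≤ b i := fun W => by
    simp only [Set.mem_Icc, Pi.le_def, forall_and]
  have hcont : ContinuousOn (weightedMean r) (Set.Icc a b) :=
    ContinuousOn.div (by fun_prop) (by fun_prop) fun W hW =>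
      (sum_pos (fun i _ => (ha i).trans_le ((hbox W).1 hW i).1) univ_nonempty).ne'
  obtain ⟨V, hV, hmax⟩ :=
    isCompact_Icc.exists_isMaxOn (Set.nonempty_Icc.2 fun i => hab i) hcont
  exact ⟨V, (hbox V).1 hV, fun W hW => hmax ((hbox W).2 hW)⟩

theorem weightedMean_thresholdStep_eq [Nonempty ι] {r a b V : ι → ℝ}
    (ha : ∀ i, 0 < a i) (hab : ∀ i, a i ≤ b i) (hV : ∀ i, a i ≤ V i ∧ V i ≤ b i)
    (hmax : ∀ W : ι → ℝ, (∀ i, a i ≤ W i ∧ W i ≤ b i) → weightedMean r W ≤ weightedMean r V) :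
    weightedMean r (fun i => a i + (b i - a i) * thresholdStep (weightedMean r V) (r i)) =
      weightedMean r V := by
  set q := weightedMean r V
  set W := fun i => a i + (b i - a i) * thresholdStep q (r i)
  have hW : ∀ i, a i ≤ W i ∧ W i ≤ b i := fun i =>
    le_add_sub_mul_and_le (hab i) (thresholdStep_mem_Icc q (r i))
  have hpos : ∀ U : ι → ℝ, (∀ i, a i ≤ U i ∧ U i ≤ b i) → 0 < ∑ i, U i := fun U hU =>
    sum_pos (fun i _ => (ha i).trans_le (hU i).1) univ_nonempty
  refine le_antisymm (hmax W hW) ((le_weightedMean_iff (hpos W hW) q).2 ?_)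
  calc 0 ≤ ∑ i, (r i - q) * V i := (le_weightedMean_iff (hpos V hV) q).1 le_rfl
    _ ≤ ∑ i, (r i - q) * W i :=
      sum_le_sum fun i _ => sub_mul_le_sub_mul_thresholdStep (hV i).1 (hV i).2

/-- The box-constrained linear-fractional supremum `Q(r; a, b)` is attained
by weights of the form `W*_i = a_i + (b_i - a_i) · ũ(r_i)` for a nondecreasing function
`ũ : ℝ → [0, 1]`: such weights are feasible and their ratio equals `Q(r; a, b)`. -/
theorem stmt_3 (n : ℕ) (hn : 1 ≤ n) (r a b : Fin n → ℝ)
    (ha : ∀ i, 0 < a i) (hab : ∀ i, a i ≤ b i) :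
    ∃ u : ℝ → ℝ, Monotone u ∧ (∀ y, u y ∈ Set.Icc (0 : ℝ) 1) ∧
      (∀ i, a i ≤ a i + (b i - a i) * u (r i) ∧ a i + (b i - a i) * u (r i) ≤ b i) ∧
      (∑ i, r i * (a i + (b i - a i) * u (r i))) /
          (∑ i, (a i + (b i - a i) * u (r i))) =
        sSup { q : ℝ | ∃ W : Fin n → ℝ, (∀ i, a i ≤ W i ∧ W i ≤ b i) ∧
          q = (∑ i, r i * W i) / (∑ i, W i) } := by
  have : Nonempty (Fin n) := ⟨⟨0, hn⟩⟩
  obtain ⟨V, hV, hmax⟩ := exists_forall_weightedMean_le r ha hab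
  have hQ : sSup { q : ℝ | ∃ W : Fin n → ℝ, (∀ i, a i ≤ W i ∧ W i ≤ b i) ∧
      q = (∑ i, r i * W i) / (∑ i, W i) } = weightedMean r V :=
    IsGreatest.csSup_eq ⟨⟨V, hV, rfl⟩, by rintro _ ⟨W, hW, rfl⟩; exact hmax W hW⟩
  rw [hQ]
  exact ⟨thresholdStep (weightedMean r V), monotone_thresholdStep _, thresholdStep_mem_Icc _,
    fun i => le_add_sub_mul_and_le (hab i) (thresholdStep_mem_Icc _ _),
    weightedMean_thresholdStep_eq ha hab hV hmax⟩
end
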